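/- Let $\psi_0:[0,T]\to\mathbb{C}$ be of bounded variation and, for $\epsilon>0$, let $\beta_\epsilon:[0,T]\to\mathbb{C}$ be measurable with $\Re\beta_\epsilon\le 0$. Define $\mathbf{II}_\epsilon(t)=-\int_0^t e^{\epsilon^{-1}\int_s^t\beta_\epsilon(r)dr}e^{-(t-s)/\epsilon}d\psi_0(s)$ (Riemann–Stieltjes integral). Then $|\int_0^T\mathbf{II}_\epsilon(t)dt| \le \int_0^T \epsilon(1-e^{-(T-s)/\epsilon})|d\psi_0(s)| \to 0$ as $\epsilon\to 0$, where $|d\psi_0|$ denotes the total variation measure of $\psi_0$. -/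

import Mathlib

/-!
Because `Re β ≤ 0`, the factor `exp (ε⁻¹ ∫ₛᵗ β)` has modulus at most one, so the inner integral
at time `t` is bounded by `∫_{[0,t]} e^{-(t-s)/ε} dσ(s)`. Integrating in `t` and exchanging the
order of integration (Tonelli), the kernel integrates to
`∫ₛᵀ e^{-(t-s)/ε} dt = ε (1 - e^{-(T-s)/ε})`, which lies in `[0, ε]`; as `σ` is finite, the
bound is at most `ε σ [0, T]`.
-/

open MeasureTheory Set Filter

open scoped ENNReal Topology

lemma integral_exp_neg_sub_div {ε : ℝ} (hε : ε ≠ 0) (s b : ℝ) :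
    ∫ t in s..b, Real.exp (-(t - s) / ε) = ε * (1 - Real.exp (-(b - s) / ε)) := by
  have hderiv : ∀ t, HasDerivAt (fun u => -ε * Real.exp (-(u - s) / ε))
      (Real.exp (-(t - s) / ε)) t := fun t => by
    refine (((((hasDerivAt_id' t).sub_const s).neg.div_const ε).exp).const_mul
      (-ε)).congr_deriv ?_
    simp only [Pi.neg_apply]
    field_simp
  rw [intervalIntegral.integral_eq_sub_of_hasDerivAt (fun t _ => hderiv t)
    ((by fun_prop : Continuous fun t => Real.exp (-(t - s) / ε)).intervalIntegrable _ _)]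
  simp only [neg_sub, neg_mul, sub_self, neg_zero, zero_div, Real.exp_zero, mul_one, sub_neg_eq_add]
  ring

lemma re_intervalIntegral_nonpos {β : ℝ → ℂ} {a b : ℝ} (hab : a ≤ b)
    (hβ : ∀ r ∈ Ioc a b, (β r).re ≤ 0) : (∫ r in a..b, β r).re ≤ 0 := by
  by_cases hint : IntervalIntegrable β volume a b
  · rw [← RCLike.re_to_complex, ← intervalIntegral.intervalIntegral_re hint,
      intervalIntegral.integral_of_le hab]
    exact setIntegral_nonpos measurableSet_Ioc hβ
  · rw [intervalIntegral.integral_undef hint, Complex.zero_re]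

lemma norm_cexp_mul_intervalIntegral_le_one {β : ℝ → ℂ} {a b c : ℝ} (hab : a ≤ b) (hc : 0 ≤ c)
    (hβ : ∀ r ∈ Ioc a b, (β r).re ≤ 0) : ‖Complex.exp (c * ∫ r in a..b, β r)‖ ≤ 1 := by
  rw [Complex.norm_exp, Real.exp_le_one_iff, Complex.re_ofReal_mul]
  exact mul_nonpos_of_nonneg_of_nonpos hc (re_intervalIntegral_nonpos hab hβ)

lemma mul_one_sub_exp_neg_div_mem_Icc {ε x : ℝ} (hε : 0 ≤ ε) (hx : 0 ≤ x) :
    ε * (1 - Real.exp (-x / ε)) ∈ Icc 0 ε := by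
  have hexp_le : Real.exp (-x / ε) ≤ 1 :=
    Real.exp_le_one_iff.2 (div_nonpos_of_nonpos_of_nonneg (neg_nonpos.2 hx) hε)
  have hexp_pos := Real.exp_pos (-x / ε)
  constructor <;> nlinarith

lemma setLIntegral_Ioc_ofReal_exp_neg_sub_div {ε s b : ℝ} (hε : 0 < ε) (hsb : s ≤ b) :
    ∫⁻ t in Ioc s b, ENNReal.ofReal (Real.exp (-(t - s) / ε)) =
      ENNReal.ofReal (ε * (1 - Real.exp (-(b - s) / ε))) := by
  rw [← ofReal_integral_eq_lintegral_ofReal, ← intervalIntegral.integral_of_le hsb,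
    integral_exp_neg_sub_div hε.ne']
  · exact (by fun_prop : Continuous fun t => Real.exp (-(t - s) / ε)).integrableOn_Ioc
  · exact ae_of_all _ fun _ => (Real.exp_pos _).le

lemma setLIntegral_Ioc_setLIntegral_Icc_swap {μ : Measure ℝ} [SFinite μ] {a b : ℝ}
    {G : ℝ → ℝ → ℝ≥0∞} (hG : Measurable (Function.uncurry G)) :
    ∫⁻ t in Ioc a b, ∫⁻ s in Icc a t, G t s ∂μ = ∫⁻ s in Icc a b, (∫⁻ t in Ioc s b, G t s) ∂μ := by
  let H : ℝ → ℝ → ℝ≥0∞ := fun t s => if s ≤ t then G t s else 0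
  have hH : Measurable (Function.uncurry H) :=
    Measurable.ite (measurableSet_le measurable_snd measurable_fst) hG measurable_const
  calc ∫⁻ t in Ioc a b, ∫⁻ s in Icc a t, G t s ∂μ
      = ∫⁻ t in Ioc a b, ∫⁻ s in Icc a b, H t s ∂μ := by
        refine setLIntegral_congr_fun measurableSet_Ioc fun t ht => ?_
        have hIcc : Iic t ∩ Icc a b = Icc a t := by
          ext s; simp only [mem_inter_iff, mem_Iic, mem_Icc]
          constructor
          · rintro ⟨hst, has, -⟩; exact ⟨has, hst⟩
          · rintro ⟨has, hst⟩; exact ⟨hst, has, hst.trans ht.2⟩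
        rw [← hIcc, ← Measure.restrict_restrict measurableSet_Iic,
          ← lintegral_indicator measurableSet_Iic]
        rfl
    _ = ∫⁻ s in Icc a b, (∫⁻ t in Ioc a b, H t s) ∂μ :=
        lintegral_lintegral_swap (μ := volume.restrict (Ioc a b)) hH.aemeasurable
    _ = ∫⁻ s in Icc a b, (∫⁻ t in Ioc s b, G t s) ∂μ := by
        refine setLIntegral_congr_fun measurableSet_Icc fun s hs => ?_
        -- the two regions differ only on the Lebesgue-null diagonal `t = s`
        have hIoc : (Ioc a b ∩ Ici s : Set ℝ) =ᵐ[volume] Ioc s b := by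
          rw [show Ioc s b = Ioc a b ∩ Ioi s by rw [Ioc_inter_Ioi, max_eq_right hs.1]]
          exact (ae_eq_refl _).inter Ioi_ae_eq_Ici.symm
        rw [← Measure.restrict_congr_set hIoc, inter_comm,
          ← Measure.restrict_restrict measurableSet_Ici, ← lintegral_indicator measurableSet_Ici]
        rfl

section Volterra

variable {E : Type*} [NormedAddCommGroup E] [NormedSpace ℝ E] {μ : Measure ℝ} {a b : ℝ}

lemma enorm_intervalIntegral_setIntegral_Icc_le [SFinite μ] (hab : a ≤ b) {f : ℝ → ℝ → E}
    {k : ℝ → ℝ → ℝ≥0∞} (hk : Measurable (Function.uncurry k))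
    (hf : ∀ t ∈ Ioc a b, ∀ᵐ s ∂μ.restrict (Icc a t), ‖f t s‖ₑ ≤ k t s) :
    ‖∫ t in a..b, ∫ s in Icc a t, f t s ∂μ‖ₑ ≤ ∫⁻ s in Icc a b, (∫⁻ t in Ioc s b, k t s) ∂μ :=
  calc ‖∫ t in a..b, ∫ s in Icc a t, f t s ∂μ‖ₑ
      ≤ ∫⁻ t in Ioc a b, ‖∫ s in Icc a t, f t s ∂μ‖ₑ := by
        rw [intervalIntegral.integral_of_le hab]
        exact enorm_integral_le_lintegral_enorm _
    _ ≤ ∫⁻ t in Ioc a b, ∫⁻ s in Icc a t, k t s ∂μ :=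
        setLIntegral_mono' measurableSet_Ioc fun t ht =>
          (enorm_integral_le_lintegral_enorm _).trans (lintegral_mono_ae (hf t ht))
    _ = ∫⁻ s in Icc a b, (∫⁻ t in Ioc s b, k t s) ∂μ := setLIntegral_Ioc_setLIntegral_Icc_swap hk

lemma norm_intervalIntegral_setIntegral_Icc_le_of_norm_le_exp [IsFiniteMeasure μ] (hab : a ≤ b)
    {ε : ℝ} (hε : 0 < ε) {f : ℝ → ℝ → E}
    (hf : ∀ t ∈ Ioc a b, ∀ᵐ s ∂μ.restrict (Icc a t), ‖f t s‖ ≤ Real.exp (-(t - s) / ε)) :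
    ‖∫ t in a..b, ∫ s in Icc a t, f t s ∂μ‖ ≤
      ∫ s in Icc a b, ε * (1 - Real.exp (-(b - s) / ε)) ∂μ := by
  have hbounds : ∀ s ∈ Icc a b, ε * (1 - Real.exp (-(b - s) / ε)) ∈ Icc 0 ε := fun s hs =>
    mul_one_sub_exp_neg_div_mem_Icc hε.le (sub_nonneg.2 hs.2)
  have hint : IntegrableOn (fun s => ε * (1 - Real.exp (-(b - s) / ε))) (Icc a b) μ := by
    refine Integrable.of_bound (by fun_prop) ε ?_
    filter_upwards [ae_restrict_mem measurableSet_Icc] with s hs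
    rw [Real.norm_of_nonneg (hbounds s hs).1]
    exact (hbounds s hs).2
  have hlint : ∫⁻ s in Icc a b, (∫⁻ t in Ioc s b, ENNReal.ofReal (Real.exp (-(t - s) / ε))) ∂μ =
      ENNReal.ofReal (∫ s in Icc a b, ε * (1 - Real.exp (-(b - s) / ε)) ∂μ) := by
    rw [ofReal_integral_eq_lintegral_ofReal hint]
    · exact setLIntegral_congr_fun measurableSet_Icc fun s hs =>
        setLIntegral_Ioc_ofReal_exp_neg_sub_div hε hs.2
    · filter_upwards [ae_restrict_mem measurableSet_Icc] with s hs using (hbounds s hs).1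
  rw [← ENNReal.ofReal_le_ofReal_iff
    (setIntegral_nonneg measurableSet_Icc fun s hs => (hbounds s hs).1), ofReal_norm, ← hlint]
  refine enorm_intervalIntegral_setIntegral_Icc_le hab (by fun_prop) fun t ht => ?_
  filter_upwards [hf t ht] with s hs
  rw [← ofReal_norm]
  exact ENNReal.ofReal_le_ofReal hs

end Volterra

lemma tendsto_setIntegral_mul_one_sub_exp_neg_div {μ : Measure ℝ} [IsFiniteMeasure μ] (a b : ℝ) :
    Tendsto (fun ε : ℝ => ∫ s in Icc a b, ε * (1 - Real.exp (-(b - s) / ε)) ∂μ)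
      (𝓝[>] 0) (𝓝 0) := by
  have hlin : Tendsto (fun ε : ℝ => ε * μ.real (Icc a b)) (𝓝[>] 0) (𝓝 0) := by
    simpa using ((tendsto_id (x := 𝓝 (0 : ℝ))).mul_const (μ.real (Icc a b))).mono_left
      nhdsWithin_le_nhds
  refine squeeze_zero_norm' ?_ hlin
  filter_upwards [self_mem_nhdsWithin] with ε hε
  refine norm_setIntegral_le_of_norm_le_const (measure_lt_top μ _) fun s hs => ?_
  have hbound := mul_one_sub_exp_neg_div_mem_Icc (le_of_lt hε) (sub_nonneg.2 hs.2)
  rw [Real.norm_of_nonneg hbound.1]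
  exact hbound.2

/-- `ψ₀` is encoded by its total variation measure `σ` and a density `φ` of unit modulus,
so that `∫ h dψ₀ = ∫ h φ dσ`. -/
theorem stmt17 (T : ℝ) (hT : 0 < T)
    (σ : Measure ℝ) [IsFiniteMeasure σ]
    (φ : ℝ → ℂ) (hφ : ∀ᵐ s ∂σ, ‖φ s‖ = 1)
    (β : ℝ → ℝ → ℂ)
    (hβre : ∀ ε : ℝ, 0 < ε → ∀ r ∈ Icc (0:ℝ) T, (β ε r).re ≤ 0) :
    (∀ ε : ℝ, 0 < ε →
      ‖∫ t in (0:ℝ)..T,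
          (-(∫ s in Icc (0:ℝ) t, Complex.exp ((ε⁻¹ : ℝ) * ∫ r in s..t, β ε r)
              * ((Real.exp (-(t - s) / ε) : ℝ) : ℂ) * φ s ∂σ))‖
        ≤ ∫ s in Icc (0:ℝ) T, ε * (1 - Real.exp (-(T - s) / ε)) ∂σ) ∧
    Tendsto (fun ε : ℝ => ∫ s in Icc (0:ℝ) T, ε * (1 - Real.exp (-(T - s) / ε)) ∂σ)
      (nhdsWithin 0 (Ioi 0)) (nhds 0) := by
  refine ⟨fun ε hε => ?_, tendsto_setIntegral_mul_one_sub_exp_neg_div 0 T⟩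
  rw [intervalIntegral.integral_neg, norm_neg]
  refine norm_intervalIntegral_setIntegral_Icc_le_of_norm_le_exp hT.le hε fun t ht => ?_
  filter_upwards [ae_restrict_mem measurableSet_Icc, ae_restrict_of_ae hφ] with s hs hφs
  have hcexp : ‖Complex.exp ((ε⁻¹ : ℝ) * ∫ r in s..t, β ε r)‖ ≤ 1 :=
    norm_cexp_mul_intervalIntegral_le_one hs.2 (inv_nonneg.2 hε.le) fun r hr =>
      hβre ε hε r ⟨hs.1.trans hr.1.le, hr.2.trans ht.2⟩
  rw [norm_mul, norm_mul, hφs, mul_one, Complex.norm_real,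
    Real.norm_of_nonneg (Real.exp_pos _).le]
  exact mul_le_of_le_one_left (Real.exp_pos _).le hcexp
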